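/- In the relational model D, the interpretation of D[I^!] (the term λx.x[x] applied to the promoted bag [I^!]) equals {[γ] :: γ | γ ∈ D}. -/

import Mathlib

/-!
Unfolding `⟦D⟧`, an element `α` lies in `⟦D[N^!]⟧` iff `[β] :: α ∈ ⟦N⟧` for some `β ∈ ⟦N⟧`.
For `N = I`, the first condition forces `β = α`, so what remains is `α ∈ ⟦I⟧`.
-/

variable {D : Type*}

/-- `b :: α`: prepending a multiset to an element of `D ≅ Multiset D × D`. -/
def dcons (e : D ≃ Multiset D × D) (b : Multiset D) (α : D) : D := e.symm (b, α)

/-- `⟦I⟧ = {[γ] :: γ | γ ∈ D}`. -/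
def interpI (e : D ≃ Multiset D × D) : Set D := {d | ∃ γ : D, d = dcons e {γ} γ}

/-- `⟦D⟧ = {[[α]::β, α] :: β | α, β ∈ D}` for the term `D = λx.x[x]`. -/
def interpDD (e : D ≃ Multiset D × D) : Set D :=
  {d | ∃ α β : D, d = dcons e {dcons e {α} β, α} β}

/-- `⟦M[N^!]⟧`. -/
def appBang (e : D ≃ Multiset D × D) (M N : Set D) : Set D :=
  {α | ∃ b : Multiset D, (∀ x ∈ b, x ∈ N) ∧ dcons e b α ∈ M}

section

variable (e : D ≃ Multiset D × D)

theorem dcons_inj {b c : Multiset D} {α β : D} :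
    dcons e b α = dcons e c β ↔ b = c ∧ α = β := by
  simp [dcons, e.symm.injective.eq_iff]

theorem dcons_mem_interpI_iff {b : Multiset D} {α : D} :
    dcons e b α ∈ interpI e ↔ b = {α} := by
  simp only [interpI, Set.mem_ofPred_eq, dcons_inj]
  constructor
  · rintro ⟨γ, rfl, rfl⟩
    rfl
  · rintro rfl
    exact ⟨α, rfl, rfl⟩

theorem dcons_mem_interpDD_iff {b : Multiset D} {α : D} :
    dcons e b α ∈ interpDD e ↔ ∃ β, b = {dcons e {β} α, β} := by
  simp only [interpDD, Set.mem_ofPred_eq, dcons_inj]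
  constructor
  · rintro ⟨β, _, rfl, rfl⟩
    exact ⟨β, rfl⟩
  · rintro ⟨β, rfl⟩
    exact ⟨β, α, rfl, rfl⟩

theorem mem_appBang_interpDD_iff {N : Set D} {α : D} :
    α ∈ appBang e (interpDD e) N ↔ ∃ β ∈ N, dcons e {β} α ∈ N := by
  simp only [appBang, Set.mem_ofPred_eq, dcons_mem_interpDD_iff]
  constructor
  · rintro ⟨_, hN, β, rfl⟩
    exact ⟨β, hN β (by simp), hN _ (by simp)⟩
  · rintro ⟨β, hβ, hβα⟩
    refine ⟨_, ?_, β, rfl⟩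
    simpa [or_imp, forall_and] using ⟨hβα, hβ⟩

theorem appBang_interpDD_interpI : appBang e (interpDD e) (interpI e) = interpI e := by
  ext α
  rw [mem_appBang_interpDD_iff]
  simp only [dcons_mem_interpI_iff, Multiset.singleton_inj]
  exact ⟨fun ⟨_, hα, rfl⟩ => hα, fun hα => ⟨α, hα, rfl⟩⟩

end

/-- In the relational model, the interpretation of `D[I^!]` (application with a promoted
bag: `⟦M[N^!]⟧ = {α | ∃ b ∈ Multiset ⟦N⟧, b :: α ∈ ⟦M⟧}`) equals `{[γ] :: γ | γ ∈ D}`. -/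
theorem interp_D_of_bang_I (e : D ≃ Multiset D × D) :
    {α : D | ∃ b : Multiset D, (∀ x ∈ b, x ∈ interpI e) ∧ dcons e b α ∈ interpDD e}
      = {α : D | ∃ γ : D, α = dcons e {γ} γ} :=
  appBang_interpDD_interpI e
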